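/- If φ_0 ∈ C(X,ℝ) satisfies h_{∞,φ_0} = 0, then the residual entropy map φ ↦ h_{∞,φ} is continuous at φ_0 with respect to the supremum norm on C(X,ℝ). -/

import Mathlib

open MeasureTheory

/-- The set of `f`-invariant Borel probability measures. -/
def invP {X : Type*} [TopologicalSpace X] [MeasurableSpace X] (f : X → X) :
    Set (ProbabilityMeasure X) :=
  {μ | (μ : Measure X).map f = (μ : Measure X)}

/-- The maximal value `b_φ = max {∫ φ dμ : μ ∈ M}`. -/
noncomputable def bMax {X : Type*} [MetricSpace X] [CompactSpace X] [MeasurableSpace X]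
    (f : X → X) (φ : C(X, ℝ)) : ℝ :=
  sSup ((fun μ : ProbabilityMeasure X => ∫ x, φ x ∂(μ : Measure X)) '' invP f)

/-- The residual entropy `h_{∞,φ} = sup {h_μ(f) : ∫ φ dμ = b_φ}` (with respect to an
abstract entropy function `h`). -/
noncomputable def residualEntropy {X : Type*} [MetricSpace X] [CompactSpace X]
    [MeasurableSpace X] (f : X → X) (h : ProbabilityMeasure X → ℝ) (φ : C(X, ℝ)) : ℝ :=
  sSup (h '' {μ ∈ invP f | ∫ x, φ x ∂(μ : Measure X) = bMax f φ})

/-! Since `h ≥ 0`, every `h_{∞,φ}` is nonnegative, so `h_{∞,φ₀} = 0` makes the map lower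
semicontinuous at `φ₀`, and it remains to show that `φ ↦ h_{∞,φ}` is upper semicontinuous.
For `c > h_{∞,φ₀}`, the pairs `(φ, μ)` with `μ` an invariant `φ`-maximizing measure and
`c ≤ h μ` form a closed subset of `C(X,ℝ) × M(X)`: integration is jointly continuous, `b_φ` is
1-Lipschitz in `φ`, and superlevel sets of `h` are closed. Since `M(X)` is compact, the projection
of this set to `C(X,ℝ)` is closed; it misses `φ₀`, and off it `h_{∞,φ} ≤ c`. -/

open Filter Set

lemma isClosed_invP {X : Type*} [MetricSpace X] [MeasurableSpace X] [BorelSpace X]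
    {f : X → X} (hf : Continuous f) : IsClosed (invP f) := by
  have hinv : invP f = {μ : ProbabilityMeasure X | μ.map hf.measurable.aemeasurable = μ} := by
    ext μ
    simp only [invP, ← ProbabilityMeasure.toMeasure_injective.eq_iff,
      ProbabilityMeasure.toMeasure_map]
  rw [hinv]
  exact isClosed_eq (ProbabilityMeasure.continuous_map hf) continuous_id

section

variable {X : Type*} [MetricSpace X] [CompactSpace X] [MeasurableSpace X] [BorelSpace X]

lemma continuous_integral_continuousMap (φ : C(X, ℝ)) :
    Continuous fun μ : ProbabilityMeasure X => ∫ x, φ x ∂(μ : Measure X) :=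
  ProbabilityMeasure.continuous_integral_boundedContinuousFunction
    (BoundedContinuousFunction.mkOfCompact φ)

lemma lipschitzWith_integral (μ : ProbabilityMeasure X) :
    LipschitzWith 1 fun φ : C(X, ℝ) => ∫ x, φ x ∂(μ : Measure X) := by
  refine LipschitzWith.of_dist_le_mul fun φ ψ => ?_
  have hint : ∀ g : C(X, ℝ), Integrable g (μ : Measure X) := fun g =>
    (BoundedContinuousFunction.mkOfCompact g).integrable _
  rw [NNReal.coe_one, one_mul, Real.dist_eq, ← integral_sub (hint φ) (hint ψ), dist_eq_norm,
    ← BoundedContinuousFunction.norm_mkOfCompact]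
  exact (BoundedContinuousFunction.mkOfCompact (φ - ψ)).norm_integral_le_norm _

lemma continuous_integral_prod :
    Continuous fun p : C(X, ℝ) × ProbabilityMeasure X => ∫ x, p.1 x ∂(p.2 : Measure X) :=
  continuous_prod_of_continuous_lipschitzWith _ 1 continuous_integral_continuousMap
    lipschitzWith_integral

lemma lipschitzWith_bMax {f : X → X} (hMne : (invP f).Nonempty) : LipschitzWith 1 (bMax f) := by
  refine LipschitzWith.of_le_add fun φ ψ => csSup_le (hMne.image _) ?_
  rintro _ ⟨μ, hμ, rfl⟩
  have hbdd : BddAbove ((fun ν : ProbabilityMeasure X => ∫ x, ψ x ∂(ν : Measure X)) '' invP f) :=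
    ⟨dist ψ 0, by
      rintro _ ⟨ν, -, rfl⟩
      simpa using le_of_abs_le ((lipschitzWith_integral ν).dist_le_mul ψ 0)⟩
  calc ∫ x, φ x ∂(μ : Measure X)
      ≤ ∫ x, ψ x ∂(μ : Measure X) + dist φ ψ := by
        have := (lipschitzWith_integral μ).dist_le_mul φ ψ
        rw [NNReal.coe_one, one_mul, Real.dist_eq] at this
        linarith [le_abs_self (∫ x, φ x ∂(μ : Measure X) - ∫ x, ψ x ∂(μ : Measure X))]
    _ ≤ bMax f ψ + dist φ ψ := by gcongr; exact le_csSup hbdd ⟨μ, hμ, rfl⟩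

lemma exists_integral_eq_bMax {f : X → X} (hf : Continuous f) (hMne : (invP f).Nonempty)
    (φ : C(X, ℝ)) : ∃ μ ∈ invP f, ∫ x, φ x ∂(μ : Measure X) = bMax f φ :=
  ((isClosed_invP hf).isCompact.image (continuous_integral_continuousMap φ)).sSup_mem
    (hMne.image _)

variable {f : X → X} {h : ProbabilityMeasure X → ℝ} {φ : C(X, ℝ)}

lemma le_residualEntropy (hf : Continuous f) (husc : UpperSemicontinuousOn h (invP f))
    {μ : ProbabilityMeasure X} (hμ : μ ∈ invP f) (hmax : ∫ x, φ x ∂(μ : Measure X) = bMax f φ) :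
    h μ ≤ residualEntropy f h φ :=
  le_csSup ((husc.bddAbove_of_isCompact (isClosed_invP hf).isCompact).mono
    (image_mono (sep_subset _ _))) ⟨μ, ⟨hμ, hmax⟩, rfl⟩

lemma residualEntropy_le (hf : Continuous f) (hMne : (invP f).Nonempty) {c : ℝ}
    (hc : ∀ μ ∈ invP f, ∫ x, φ x ∂(μ : Measure X) = bMax f φ → h μ ≤ c) :
    residualEntropy f h φ ≤ c := by
  obtain ⟨μ, hμ, hmax⟩ := exists_integral_eq_bMax hf hMne φ
  refine csSup_le ⟨h μ, μ, ⟨hμ, hmax⟩, rfl⟩ ?_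
  rintro _ ⟨ν, ⟨hν, hνmax⟩, rfl⟩
  exact hc ν hν hνmax

lemma residualEntropy_nonneg (hf : Continuous f) (hMne : (invP f).Nonempty)
    (husc : UpperSemicontinuousOn h (invP f)) (hnn : ∀ μ ∈ invP f, 0 ≤ h μ) :
    0 ≤ residualEntropy f h φ := by
  obtain ⟨μ, hμ, hmax⟩ := exists_integral_eq_bMax hf hMne φ
  exact (hnn μ hμ).trans (le_residualEntropy hf husc hμ hmax)

theorem upperSemicontinuous_residualEntropy (hf : Continuous f) (hMne : (invP f).Nonempty)
    (husc : UpperSemicontinuousOn h (invP f)) :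
    UpperSemicontinuous (residualEntropy f h) := by
  intro φ₀ c hc
  obtain ⟨c', hφ₀c', hc'c⟩ := exists_between hc
  set S : Set (C(X, ℝ) × ProbabilityMeasure X) :=
    {p | ∫ x, p.1 x ∂(p.2 : Measure X) = bMax f p.1} ∩ univ ×ˢ (invP f ∩ h ⁻¹' Ici c')
  have hS : IsClosed S :=
    (isClosed_eq continuous_integral_prod
      ((lipschitzWith_bMax hMne).continuous.comp continuous_fst)).inter
      (isClosed_univ.prod
        (husc.isCompact_inter_preimage_Ici (isClosed_invP hf).isCompact c').isClosed)
  have hφ₀ : φ₀ ∉ Prod.fst '' S := by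
    rintro ⟨⟨φ, μ⟩, ⟨hmax, -, hμ, hcμ⟩, rfl⟩
    exact (hφ₀c'.trans_le hcμ).not_ge (le_residualEntropy hf husc hμ hmax)
  filter_upwards [(isClosedMap_fst_of_compactSpace _ hS).isOpen_compl.mem_nhds hφ₀] with φ hφ
  refine (residualEntropy_le hf hMne fun μ hμ hmax => ?_).trans_lt hc'c
  by_contra! hcμ
  exact hφ ⟨(φ, μ), ⟨hmax, trivial, hμ, hcμ.le⟩, rfl⟩

end

theorem statement8_general {X : Type*} [MetricSpace X] [CompactSpace X]
    [MeasurableSpace X] [BorelSpace X]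
    (f : X → X) (hf : Continuous f)
    (hMne : (invP f).Nonempty)
    (h : ProbabilityMeasure X → ℝ)
    (husc : UpperSemicontinuousOn h (invP f))
    (hnn : ∀ μ ∈ invP f, 0 ≤ h μ)
    (φ₀ : C(X, ℝ)) (h0 : residualEntropy f h φ₀ = 0) :
    ContinuousAt (residualEntropy f h) φ₀ :=
  continuousAt_iff_lower_upperSemicontinuousAt.2
    ⟨fun _ hc => Eventually.of_forall fun _ =>
      hc.trans_le (h0 ▸ residualEntropy_nonneg hf hMne husc hnn),
    upperSemicontinuous_residualEntropy hf hMne husc φ₀⟩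

/-- If `φ₀ ∈ C(X,ℝ)` satisfies `h_{∞,φ₀} = 0`, then the residual entropy
map `φ ↦ h_{∞,φ}` is continuous at `φ₀` with respect to the supremum norm on `C(X,ℝ)`.
The entropy map `h` is upper semi-continuous, affine, nonnegative and bounded on `M`. -/
theorem statement8 {X : Type*} [MetricSpace X] [CompactSpace X]
    [MeasurableSpace X] [BorelSpace X]
    (f : X → X) (hf : Continuous f)
    (hMne : (invP f).Nonempty)
    (h : ProbabilityMeasure X → ℝ)
    (husc : UpperSemicontinuousOn h (invP f))
    (haff : ∀ μ ∈ invP f, ∀ ν ∈ invP f, ∀ t : ℝ, 0 ≤ t → t ≤ 1 →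
      ∀ σ : ProbabilityMeasure X,
        (σ : Measure X) = ENNReal.ofReal t • (μ : Measure X)
            + ENNReal.ofReal (1 - t) • (ν : Measure X) →
        h σ = t * h μ + (1 - t) * h ν)
    (hnn : ∀ μ ∈ invP f, 0 ≤ h μ)
    (hbdd : BddAbove (h '' invP f))
    (φ₀ : C(X, ℝ)) (h0 : residualEntropy f h φ₀ = 0) :
    ContinuousAt (residualEntropy f h) φ₀ :=
  statement8_general f hf hMne h husc hnn φ₀ h0
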